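/- If there exists a Hintikka structure for a PDL formula φ in negation normal form, then φ is satisfiable. -/
import Mathlib


mutual
  inductive Fml : Type
    | atom : ℕ → Fml
    | neg  : Fml → Fml
    | and  : Fml → Fml → Fml
    | or   : Fml → Fml → Fml
    | dia  : Prg → Fml → Fml
    | box  : Prg → Fml → Fml
  inductive Prg : Type
    | atom  : ℕ → Prg
    | seq   : Prg → Prg → Prg
    | union : Prg → Prg → Prg
    | star  : Prg → Prg
    | test  : Fml → Prg
end

/-- A PDL model: worlds, relations for atomic programs, valuation. -/
structure Model where
  W : Type
  R : ℕ → W → W → Prop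
  V : ℕ → W → Prop

mutual
  /-- Truth of a formula at a world. -/
  def Model.sat (M : Model) : M.W → Fml → Prop
    | w, .atom p  => M.V p w
    | w, .neg φ   => ¬ M.sat w φ
    | w, .and φ ψ => M.sat w φ ∧ M.sat w ψ
    | w, .or φ ψ  => M.sat w φ ∨ M.sat w ψ
    | w, .dia α φ => ∃ v, M.rel α w v ∧ M.sat v φ
    | w, .box α φ => ∀ v, M.rel α w v → M.sat v φ
  /-- Interpretation of programs as binary relations. -/
  def Model.rel (M : Model) : Prg → M.W → M.W → Prop
    | .atom a, w, v    => M.R a w v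
    | .seq α β, w, v   => ∃ u, M.rel α w u ∧ M.rel β u v
    | .union α β, w, v => M.rel α w v ∨ M.rel β w v
    | .star α, w, v    => Relation.ReflTransGen (fun x y => M.rel α x y) w v
    | .test φ, w, v    => w = v ∧ M.sat w φ
end

mutual
  /-- Negation normal form: negation only immediately before atoms. -/
  inductive IsNNF : Fml → Prop
    | atom (p : ℕ) : IsNNF (.atom p)
    | natom (p : ℕ) : IsNNF (.neg (.atom p))
    | and {φ ψ : Fml} : IsNNF φ → IsNNF ψ → IsNNF (.and φ ψ)
    | or {φ ψ : Fml} : IsNNF φ → IsNNF ψ → IsNNF (.or φ ψ)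
    | dia {α : Prg} {φ : Fml} : IsNNFp α → IsNNF φ → IsNNF (.dia α φ)
    | box {α : Prg} {φ : Fml} : IsNNFp α → IsNNF φ → IsNNF (.box α φ)
  inductive IsNNFp : Prg → Prop
    | atom (a : ℕ) : IsNNFp (.atom a)
    | seq {α β : Prg} : IsNNFp α → IsNNFp β → IsNNFp (.seq α β)
    | union {α β : Prg} : IsNNFp α → IsNNFp β → IsNNFp (.union α β)
    | star {α : Prg} : IsNNFp α → IsNNFp (.star α)
    | test {φ : Fml} : IsNNF φ → IsNNFp (.test φ)
end

/-- The reduction relation ⇝ on diamond formulae. -/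
inductive Red : Fml → Fml → Prop
  | seq (α β : Prg) (χ : Fml) : Red (.dia (.seq α β) χ) (.dia α (.dia β χ))
  | unionL (α β : Prg) (χ : Fml) : Red (.dia (.union α β) χ) (.dia α χ)
  | unionR (α β : Prg) (χ : Fml) : Red (.dia (.union α β) χ) (.dia β χ)
  | star1 (α : Prg) (χ : Fml) : Red (.dia (.star α) χ) χ
  | star2 (α : Prg) (χ : Fml) : Red (.dia (.star α) χ) (.dia α (.dia (.star α) χ))
  | test (ψ χ : Fml) : Red (.dia (.test ψ) χ) χ

/-- Pre φ : formulae of the form ⟨β₁⟩…⟨β_m⟩φ with m ≥ 0. -/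
inductive Pre (φ : Fml) : Fml → Prop
  | base : Pre φ φ
  | dia (α : Prg) {ψ : Fml} : Pre φ ψ → Pre φ (.dia α ψ)

mutual
  /-- Negation normal form of a formula. -/
  def nnf : Fml → Fml
    | .atom p => .atom p
    | .neg φ => nneg φ
    | .and φ ψ => .and (nnf φ) (nnf ψ)
    | .or φ ψ => .or (nnf φ) (nnf ψ)
    | .dia α φ => .dia (nnfp α) (nnf φ)
    | .box α φ => .box (nnfp α) (nnf φ)
  /-- nnf of the negation of a formula. -/
  def nneg : Fml → Fml
    | .atom p => .neg (.atom p)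
    | .neg φ => nnf φ
    | .and φ ψ => .or (nneg φ) (nneg ψ)
    | .or φ ψ => .and (nneg φ) (nneg ψ)
    | .dia α φ => .box (nnfp α) (nneg φ)
    | .box α φ => .dia (nnfp α) (nneg φ)
  def nnfp : Prg → Prg
    | .atom a => .atom a
    | .seq α β => .seq (nnfp α) (nnfp β)
    | .union α β => .union (nnfp α) (nnfp β)
    | .star α => .star (nnfp α)
    | .test φ => .test (nnf φ)
end

/-- A structure: worlds, relations for atomic programs, labelling. -/
structure Str where
  W : Type
  R : ℕ → W → W → Prop
  L : W → Set Fml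

/-- A fulfilling chain for (φ, β, w) in the structure S. -/
def FulfillingChain (S : Str) (φ : Fml) (β : Prg) (w : S.W) : Prop :=
  ∃ (n : ℕ) (ws : ℕ → S.W) (ψs : ℕ → Fml),
    (∀ i ≤ n, Pre φ (ψs i) ∧ ψs i ∈ S.L (ws i)) ∧
    ws 0 = w ∧ ψs 0 = .dia β φ ∧ ψs n = φ ∧ (∀ i < n, ψs i ≠ φ) ∧
    (∀ i < n,
      (∀ (a : ℕ) (χ : Fml), ψs i = Fml.dia (.atom a) χ →
          ψs (i+1) = χ ∧ S.R a (ws i) (ws (i+1))) ∧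
      ((∀ (a : ℕ) (χ : Fml), ψs i ≠ Fml.dia (.atom a) χ) →
          Red (ψs i) (ψs (i+1)) ∧ ws i = ws (i+1)))

/-- Hintikka structure: conditions H1–H6. -/
def Hintikka (S : Str) : Prop :=
  ∀ w : S.W,
    -- H1
    (∀ p : ℕ, Fml.neg (.atom p) ∈ S.L w → Fml.atom p ∉ S.L w) ∧
    -- H2 (α-formulae)
    (∀ φ ψ : Fml, Fml.and φ ψ ∈ S.L w → φ ∈ S.L w ∧ ψ ∈ S.L w) ∧
    (∀ (α β : Prg) (φ : Fml), Fml.box (.union α β) φ ∈ S.L w →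
        Fml.box α φ ∈ S.L w ∧ Fml.box β φ ∈ S.L w) ∧
    (∀ (α : Prg) (φ : Fml), Fml.box (.star α) φ ∈ S.L w →
        φ ∈ S.L w ∧ Fml.box α (.box (.star α) φ) ∈ S.L w) ∧
    (∀ ψ φ : Fml, Fml.dia (.test ψ) φ ∈ S.L w → φ ∈ S.L w ∧ ψ ∈ S.L w) ∧
    (∀ (α β : Prg) (φ : Fml), Fml.dia (.seq α β) φ ∈ S.L w →
        Fml.dia α (.dia β φ) ∈ S.L w) ∧
    (∀ (α β : Prg) (φ : Fml), Fml.box (.seq α β) φ ∈ S.L w →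
        Fml.box α (.box β φ) ∈ S.L w) ∧
    -- H3 (β-formulae)
    (∀ φ ψ : Fml, Fml.or φ ψ ∈ S.L w → φ ∈ S.L w ∨ ψ ∈ S.L w) ∧
    (∀ (α β : Prg) (φ : Fml), Fml.dia (.union α β) φ ∈ S.L w →
        Fml.dia α φ ∈ S.L w ∨ Fml.dia β φ ∈ S.L w) ∧
    (∀ (α : Prg) (φ : Fml), Fml.dia (.star α) φ ∈ S.L w →
        φ ∈ S.L w ∨ Fml.dia α (.dia (.star α) φ) ∈ S.L w) ∧
    (∀ ψ φ : Fml, Fml.box (.test ψ) φ ∈ S.L w → nneg ψ ∈ S.L w ∨ φ ∈ S.L w) ∧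
    -- H4
    (∀ (a : ℕ) (φ : Fml), Fml.dia (.atom a) φ ∈ S.L w →
        ∃ v, S.R a w v ∧ φ ∈ S.L v) ∧
    -- H5
    (∀ (a : ℕ) (φ : Fml), Fml.box (.atom a) φ ∈ S.L w →
        ∀ v, S.R a w v → φ ∈ S.L v) ∧
    -- H6
    (∀ (α : Prg) (φ : Fml), Fml.dia (.star α) φ ∈ S.L w →
        FulfillingChain S φ (.star α) w)


/-! ### Auxiliary machinery -/

mutual
  def sizeF : Fml → ℕ
    | .atom _ => 1
    | .neg φ => sizeF φ
    | .and φ ψ => sizeF φ + sizeF ψ + 1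
    | .or φ ψ => sizeF φ + sizeF ψ + 1
    | .dia α φ => sizeP α + sizeF φ + 1
    | .box α φ => sizeP α + sizeF φ + 1
  def sizeP : Prg → ℕ
    | .atom _ => 1
    | .seq α β => sizeP α + sizeP β + 2
    | .union α β => sizeP α + sizeP β + 1
    | .star α => sizeP α + 1
    | .test φ => sizeF φ + 1
end

/-- Basic facts about nnf/nneg on NNF formulae, by joint strong induction. -/
theorem nnfFacts : ∀ n : ℕ,
    (∀ α, sizeP α ≤ n → IsNNFp α → nnfp α = α) ∧
    (∀ φ, sizeF φ ≤ n → IsNNF φ →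
      nnf φ = φ ∧ sizeF (nneg φ) = sizeF φ ∧ IsNNF (nneg φ)) := by
  intro n
  induction n with
  | zero =>
    constructor
    · intro α hs hα; cases hα <;> simp [sizeP, sizeF] at hs
    · intro φ hs hφ; cases hφ <;> simp [sizeP, sizeF] at hs
  | succ n IH =>
    obtain ⟨IHp, IHf⟩ := IH
    constructor
    · intro α hs hα
      cases hα with
      | atom a => rfl
      | seq hα hβ =>
        simp only [sizeP] at hs
        simp only [nnfp, IHp _ (by omega) hα, IHp _ (by omega) hβ]
      | union hα hβ =>
        simp only [sizeP] at hs
        simp only [nnfp, IHp _ (by omega) hα, IHp _ (by omega) hβ]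
      | star hα =>
        simp only [sizeP] at hs
        simp only [nnfp, IHp _ (by omega) hα]
      | test hφ =>
        simp only [sizeP] at hs
        simp only [nnfp, (IHf _ (by omega) hφ).1]
    · intro φ hs hφ
      cases hφ with
      | atom p => exact ⟨rfl, rfl, IsNNF.natom p⟩
      | natom p => exact ⟨rfl, rfl, IsNNF.atom p⟩
      | and hφ hψ =>
        simp only [sizeF] at hs
        obtain ⟨e1, s1, n1⟩ := IHf _ (by omega) hφ
        obtain ⟨e2, s2, n2⟩ := IHf _ (by omega) hψ
        exact ⟨by simp only [nnf, e1, e2], by simp only [nneg, sizeF, s1, s2],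
          IsNNF.or n1 n2⟩
      | or hφ hψ =>
        simp only [sizeF] at hs
        obtain ⟨e1, s1, n1⟩ := IHf _ (by omega) hφ
        obtain ⟨e2, s2, n2⟩ := IHf _ (by omega) hψ
        exact ⟨by simp only [nnf, e1, e2], by simp only [nneg, sizeF, s1, s2],
          IsNNF.and n1 n2⟩
      | dia hα hφ =>
        simp only [sizeF] at hs
        obtain ⟨e1, s1, n1⟩ := IHf _ (by omega) hφ
        have ep := IHp _ (by omega) hα
        exact ⟨by simp only [nnf, e1, ep], by simp only [nneg, sizeF, s1, ep],
          by simp only [nneg, ep]; exact IsNNF.box hα n1⟩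
      | box hα hφ =>
        simp only [sizeF] at hs
        obtain ⟨e1, s1, n1⟩ := IHf _ (by omega) hφ
        have ep := IHp _ (by omega) hα
        exact ⟨by simp only [nnf, e1, ep], by simp only [nneg, sizeF, s1, ep],
          by simp only [nneg, ep]; exact IsNNF.dia hα n1⟩

theorem nnfp_eq {α : Prg} (h : IsNNFp α) : nnfp α = α :=
  (nnfFacts (sizeP α)).1 α le_rfl h

theorem sizeF_nneg {φ : Fml} (h : IsNNF φ) : sizeF (nneg φ) = sizeF φ :=
  ((nnfFacts (sizeF φ)).2 φ le_rfl h).2.1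

theorem isNNF_nneg {φ : Fml} (h : IsNNF φ) : IsNNF (nneg φ) :=
  ((nnfFacts (sizeF φ)).2 φ le_rfl h).2.2

/-- Semantic soundness of `nneg` on NNF formulae. -/
theorem nneg_sound (M : Model) : ∀ n φ, sizeF φ ≤ n → IsNNF φ →
    ∀ w, M.sat w (nneg φ) ↔ ¬ M.sat w φ := by
  intro n
  induction n with
  | zero => intro φ hs hφ; cases hφ <;> simp [sizeF] at hs
  | succ n IH =>
    intro φ hs hφ w
    cases hφ with
    | atom p => simp [nneg, Model.sat]
    | natom p => simp [nneg, nnf, Model.sat]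
    | and hφ hψ =>
      simp only [sizeF] at hs
      simp only [nneg, Model.sat, IH _ (by omega) hφ, IH _ (by omega) hψ]
      tauto
    | or hφ hψ =>
      simp only [sizeF] at hs
      simp only [nneg, Model.sat, IH _ (by omega) hφ, IH _ (by omega) hψ]
      tauto
    | dia hα hφ =>
      simp only [sizeF] at hs
      simp only [nneg, nnfp_eq hα]
      simp [Model.sat, IH _ (by omega) hφ]
    | box hα hφ =>
      simp only [sizeF] at hs
      simp only [nneg, nnfp_eq hα]
      simp [Model.sat, IH _ (by omega) hφ]

/-- Reflexive-transitive subprogram relation. -/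
inductive SubP : Prg → Prg → Prop
  | refl (α) : SubP α α
  | seqL {γ α β} : SubP γ α → SubP γ (.seq α β)
  | seqR {γ α β} : SubP γ β → SubP γ (.seq α β)
  | unionL {γ α β} : SubP γ α → SubP γ (.union α β)
  | unionR {γ α β} : SubP γ β → SubP γ (.union α β)
  | star {γ α} : SubP γ α → SubP γ (.star α)

theorem SubP.trans {γ δ α : Prg} (h1 : SubP γ δ) (h2 : SubP δ α) : SubP γ α := by
  induction h2 with
  | refl => exact h1
  | seqL _ ih => exact SubP.seqL ih
  | seqR _ ih => exact SubP.seqR ih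
  | unionL _ ih => exact SubP.unionL ih
  | unionR _ ih => exact SubP.unionR ih
  | star _ ih => exact SubP.star ih

theorem SubP.size {γ α : Prg} (h : SubP γ α) : sizeP γ ≤ sizeP α := by
  induction h <;> simp [sizeP] at * <;> omega

theorem SubP.nnfp {γ α : Prg} (h : SubP γ α) (hα : IsNNFp α) : IsNNFp γ := by
  induction h with
  | refl => exact hα
  | seqL _ ih => cases hα with | seq h1 h2 => exact ih h1
  | seqR _ ih => cases hα with | seq h1 h2 => exact ih h2
  | unionL _ ih => cases hα with | union h1 h2 => exact ih h1
  | unionR _ ih => cases hα with | union h1 h2 => exact ih h2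
  | star _ ih => cases hα with | star h1 => exact ih h1

/-- The invariant along a fulfilling chain: a stack of diamonds over φ whose
head programs are subprograms of α0. -/
inductive Heads (α0 : Prg) (φ : Fml) : Fml → Prop
  | base : Heads α0 φ φ
  | cons {γ ψ} : SubP γ α0 → Heads α0 φ ψ → Heads α0 φ (.dia γ ψ)

theorem heads_inv {α0 : Prg} {φ ψ : Fml} (h : Heads α0 φ ψ) (hne : ψ ≠ φ) :
    ∃ γ χ, ψ = .dia γ χ ∧ SubP γ α0 ∧ Heads α0 φ χ := by
  cases h with
  | base => exact absurd rfl hne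
  | cons hs hh => exact ⟨_, _, rfl, hs, hh⟩

theorem heads_red {α0 : Prg} {φ ψ ψ' : Fml} (h : Heads α0 φ ψ) (hne : ψ ≠ φ)
    (hr : Red ψ ψ') : Heads α0 φ ψ' := by
  obtain ⟨γ, χ, rfl, hs, hh⟩ := heads_inv h hne
  cases hr with
  | seq α β χ =>
    exact Heads.cons ((SubP.seqL (SubP.refl _)).trans hs)
      (Heads.cons ((SubP.seqR (SubP.refl _)).trans hs) hh)
  | unionL α β χ => exact Heads.cons ((SubP.unionL (SubP.refl _)).trans hs) hh
  | unionR α β χ => exact Heads.cons ((SubP.unionR (SubP.refl _)).trans hs) hh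
  | star1 α χ => exact hh
  | star2 α χ =>
    exact Heads.cons ((SubP.star (SubP.refl _)).trans hs) (Heads.cons hs hh)
  | test ψ χ => exact hh

/-- The model induced by a structure. -/
def toModel (S : Str) : Model := ⟨S.W, S.R, fun p w => Fml.atom p ∈ S.L w⟩

/-- Syntactic propagation for boxes. -/
theorem boxProp (S : Str) (hH : Hintikka S) (N : ℕ)
    (ih : ∀ χ, sizeF χ < N → IsNNF χ → ∀ w, χ ∈ S.L w → (toModel S).sat w χ) :
    ∀ (k : ℕ) (γ : Prg), sizeP γ ≤ k → sizeP γ < N → IsNNFp γ →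
      ∀ (ψ : Fml) (u v : S.W), Fml.box γ ψ ∈ S.L u → (toModel S).rel γ u v →
        ψ ∈ S.L v := by
  intro k
  induction k with
  | zero => intro γ hs; cases γ <;> simp [sizeP, sizeF] at hs
  | succ k IH =>
    intro γ hk hN hγ ψ u v hmem hrel
    cases γ with
    | atom a =>
      exact ((hH u).2.2.2.2.2.2.2.2.2.2.2.2.1) a ψ hmem v hrel
    | seq α β =>
      simp only [sizeP] at hk hN
      obtain ⟨hα, hβ⟩ : IsNNFp α ∧ IsNNFp β := by cases hγ with | seq h1 h2 => exact ⟨h1, h2⟩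
      obtain ⟨m, h1, h2⟩ : ∃ m, (toModel S).rel α u m ∧ (toModel S).rel β m v := hrel
      have hb := (hH u).2.2.2.2.2.2.1 α β ψ hmem
      have := IH α (by omega) (by omega) hα _ u m hb h1
      exact IH β (by omega) (by omega) hβ ψ m v this h2
    | union α β =>
      simp only [sizeP] at hk hN
      obtain ⟨hα, hβ⟩ : IsNNFp α ∧ IsNNFp β := by cases hγ with | union h1 h2 => exact ⟨h1, h2⟩
      have hb := (hH u).2.2.1 α β ψ hmem
      cases hrel with
      | inl h => exact IH α (by omega) (by omega) hα ψ u v hb.1 h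
      | inr h => exact IH β (by omega) (by omega) hβ ψ u v hb.2 h
    | star α =>
      simp only [sizeP] at hk hN
      have hα : IsNNFp α := by cases hγ with | star h1 => exact h1
      have hrtg : Relation.ReflTransGen (fun x y => (toModel S).rel α x y) u v := hrel
      have key : Fml.box (.star α) ψ ∈ S.L v := by
        clear hrel
        induction hrtg using Relation.ReflTransGen.head_induction_on with
        | refl => exact hmem
        | head hstep _ ihm =>
          rename_i x c _
          have hb := (hH x).2.2.2.1 α ψ ‹Fml.box (.star α) ψ ∈ S.L x›
          exact ihm (IH α (by omega) (by omega) hα _ x c hb.2 hstep)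
      exact ((hH v).2.2.2.1 α ψ key).1
    | test χ =>
      simp only [sizeP] at hk hN
      have hχ : IsNNF χ := by cases hγ with | test h1 => exact h1
      obtain ⟨rfl, hsat⟩ : u = v ∧ (toModel S).sat u χ := hrel
      cases (hH u).2.2.2.2.2.2.2.2.2.2.1 χ ψ hmem with
      | inl h =>
        have := ih (nneg χ) (by rw [sizeF_nneg hχ]; omega) (isNNF_nneg hχ) u h
        exact absurd hsat (((nneg_sound (toModel S) (sizeF χ) χ le_rfl hχ u)).1 this)
      | inr h => exact h

/-- The truth lemma. -/
theorem truth (S : Str) (hH : Hintikka S) :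
    ∀ (n : ℕ) (ψ : Fml), sizeF ψ ≤ n → IsNNF ψ → ∀ w, ψ ∈ S.L w →
      (toModel S).sat w ψ := by
  intro n
  induction n with
  | zero => intro ψ hs hψ; cases hψ <;> simp [sizeF, sizeP] at hs
  | succ n IH =>
    intro ψ hs hψ w hmem
    cases hψ with
    | atom p => exact hmem
    | natom p => exact (hH w).1 p hmem
    | and hφ1 hφ2 =>
      simp only [sizeF] at hs
      have h := (hH w).2.1 _ _ hmem
      exact ⟨IH _ (by omega) hφ1 w h.1, IH _ (by omega) hφ2 w h.2⟩
    | or hφ1 hφ2 =>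
      simp only [sizeF] at hs
      cases (hH w).2.2.2.2.2.2.2.1 _ _ hmem with
      | inl h => exact Or.inl (IH _ (by omega) hφ1 w h)
      | inr h => exact Or.inr (IH _ (by omega) hφ2 w h)
    | box hα hφ =>
      rename_i α φ
      simp only [sizeF] at hs
      intro v hrel
      have hm : φ ∈ S.L v :=
        boxProp S hH (n+1) (fun χ hχ => IH χ (by omega)) (sizeP α) α le_rfl
          (by omega) hα φ w v hmem hrel
      exact IH φ (by omega) hφ v hm
    | dia hα hφ =>
      rename_i α φ
      cases α with
      | atom a =>
        simp only [sizeF, sizeP] at hs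
        obtain ⟨v, hR, hm⟩ := (hH w).2.2.2.2.2.2.2.2.2.2.2.1 a φ hmem
        exact ⟨v, hR, IH φ (by omega) hφ v hm⟩
      | seq α β =>
        simp only [sizeF, sizeP] at hs
        obtain ⟨h1, h2⟩ : IsNNFp α ∧ IsNNFp β := by cases hα with | seq a b => exact ⟨a, b⟩
        have hm := (hH w).2.2.2.2.2.1 α β φ hmem
        have := IH _ (by simp [sizeF]; omega) (IsNNF.dia h1 (IsNNF.dia h2 hφ)) w hm
        obtain ⟨v1, hr1, v2, hr2, hs2⟩ := this
        exact ⟨v2, ⟨v1, hr1, hr2⟩, hs2⟩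
      | union α β =>
        simp only [sizeF, sizeP] at hs
        obtain ⟨h1, h2⟩ : IsNNFp α ∧ IsNNFp β := by cases hα with | union a b => exact ⟨a, b⟩
        cases (hH w).2.2.2.2.2.2.2.2.1 α β φ hmem with
        | inl h =>
          obtain ⟨v, hr, hsv⟩ := IH _ (by simp [sizeF]; omega) (IsNNF.dia h1 hφ) w h
          exact ⟨v, Or.inl hr, hsv⟩
        | inr h =>
          obtain ⟨v, hr, hsv⟩ := IH _ (by simp [sizeF]; omega) (IsNNF.dia h2 hφ) w h
          exact ⟨v, Or.inr hr, hsv⟩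
      | test χ =>
        simp only [sizeF, sizeP] at hs
        have hχ : IsNNF χ := by cases hα with | test a => exact a
        have hm := (hH w).2.2.2.2.1 χ φ hmem
        exact ⟨w, ⟨rfl, IH χ (by omega) hχ w hm.2⟩, IH φ (by omega) hφ w hm.1⟩
      | star α =>
        simp only [sizeF, sizeP] at hs
        have hNNFα : IsNNFp α := by cases hα with | star a => exact a
        obtain ⟨m, ws, ψs, hmemA, hw0, hψ0, hψm, hneφ, hstep⟩ :=
          (hH w).2.2.2.2.2.2.2.2.2.2.2.2.2 α φ hmem
        have Hd : ∀ i, i ≤ m → Heads (.star α) φ (ψs i) := by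
          intro i
          induction i with
          | zero => intro _; rw [hψ0]; exact Heads.cons (SubP.refl _) Heads.base
          | succ i IHi =>
            intro hi
            have hi' : i < m := by omega
            have hd := IHi (by omega)
            by_cases hat : ∃ a χ, ψs i = Fml.dia (.atom a) χ
            · obtain ⟨a, χ, heq⟩ := hat
              have he2 := ((hstep i hi').1 a χ heq).1
              rw [he2]
              obtain ⟨γ, χ', heq', hsub, hd'⟩ := heads_inv hd (hneφ i hi')
              rw [heq] at heq'
              obtain ⟨rfl, rfl⟩ : γ = Prg.atom a ∧ χ' = χ := by
                simpa [Fml.dia.injEq] using heq'.symm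
              exact hd'
            · push_neg at hat
              exact heads_red hd (hneφ i hi') ((hstep i hi').2 hat).1
        have Sat : ∀ j, j ≤ m → (toModel S).sat (ws (m - j)) (ψs (m - j)) := by
          intro j
          induction j with
          | zero =>
            intro _
            simp only [Nat.sub_zero, hψm]
            exact IH φ (by omega) hφ _ (by have := (hmemA m le_rfl).2; rwa [hψm] at this)
          | succ j IHj =>
            intro hj
            set i := m - (j+1) with hidef
            have hij : m - j = i + 1 := by omega
            have hi' : i < m := by omega
            have hsat1 : (toModel S).sat (ws (i+1)) (ψs (i+1)) := by
              rw [← hij]; exact IHj (by omega)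
            have hd := Hd i (by omega)
            obtain ⟨γ, χ, heqi, hsub, hdχ⟩ := heads_inv hd (hneφ i hi')
            by_cases hat : ∃ a χ', ψs i = Fml.dia (.atom a) χ'
            · obtain ⟨a, χ', heq⟩ := hat
              obtain ⟨heq2, hR⟩ := (hstep i hi').1 a χ' heq
              rw [heq2] at hsat1
              rw [heq]
              exact ⟨ws (i+1), hR, hsat1⟩
            · push_neg at hat
              obtain ⟨hred, hwe⟩ := (hstep i hi').2 hat
              rw [heqi] at hred
              rw [hwe, heqi]
              generalize hq : ψs (i+1) = t at hred hsat1
              cases hred with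
              | seq α' β' χ =>
                obtain ⟨v1, hr1, v2, hr2, hs2⟩ := hsat1
                exact ⟨v2, ⟨v1, hr1, hr2⟩, hs2⟩
              | unionL α' β' χ =>
                obtain ⟨v, hr, hsv⟩ := hsat1
                exact ⟨v, Or.inl hr, hsv⟩
              | unionR α' β' χ =>
                obtain ⟨v, hr, hsv⟩ := hsat1
                exact ⟨v, Or.inr hr, hsv⟩
              | star1 α' χ =>
                exact ⟨ws (i+1), Relation.ReflTransGen.refl, hsat1⟩
              | star2 α' χ =>
                obtain ⟨v1, hr1, v2, hr2, hs2⟩ := hsat1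
                exact ⟨v2, Relation.ReflTransGen.head hr1 hr2, hs2⟩
              | test χt χ =>
                have hmemi : Fml.dia (.test χt) χ ∈ S.L (ws i) := by
                  have := (hmemA i (by omega)).2; rwa [heqi] at this
                have hχt : χt ∈ S.L (ws i) := ((hH (ws i)).2.2.2.2.1 χt χ hmemi).2
                have hsub' : sizeF χt + 1 ≤ sizeP α + 1 := by
                  have := hsub.size; simpa [sizeP] using this
                have hNNFχt : IsNNF χt := by
                  have := hsub.nnfp (IsNNFp.star hNNFα)
                  cases this with | test a => exact a
                have hsχt : (toModel S).sat (ws i) χt :=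
                  IH χt (by omega) hNNFχt (ws i) hχt
                rw [hwe] at hsχt
                exact ⟨ws (i+1), ⟨rfl, hsχt⟩, hsat1⟩
        have := Sat m le_rfl
        simp only [Nat.sub_self, hw0, hψ0] at this
        exact this

theorem hintikka_satisfiable (φ : Fml) (hnnf : IsNNF φ)
    (S : Str) (hH : Hintikka S) (v : S.W) (hv : φ ∈ S.L v) :
    ∃ (M : Model) (w : M.W), M.sat w φ := by
  exact ⟨toModel S, v, truth S hH (sizeF φ) φ le_rfl hnnf v hv⟩
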